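/- In the Markov-modulated setting, assume P_i(A_1^i=1)=1 for all i∈S. Then there exists a family (σ_j)_{j∈S} of signs in {±1} such that for all n≥1, sign(Π_n)=σ_{M_n}/σ_{M_0} a.s., and consequently Π_n=σ_{M_n}e^{g(M_n)−g(M_0)}/σ_{M_0} a.s. for a suitable function g:S→R. -/

import Mathlib

open MeasureTheory ProbabilityTheory Filter
open scoped ENNReal NNReal Topology

noncomputable section

namespace Perpetuities

/-- The positive part of the logarithm, with the convention `log⁺ 0 = 0`. -/
def logplus (x : ℝ) : ℝ := max (Real.log x) 0

/-- Weak convergence of a sequence of (probability) measures on `ℝ`. -/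
def WeakLim (μ : ℕ → Measure ℝ) (ν : Measure ℝ) : Prop :=
  ∀ f : BoundedContinuousFunction ℝ ℝ,
    Tendsto (fun n => ∫ x, f x ∂ μ n) atTop (nhds (∫ x, f x ∂ ν))

/-- `|f n| → ∞` in `μ`-probability. -/
def TendstoInfInMeasure {Ω : Type*} [MeasurableSpace Ω] (μ : Measure Ω) (f : ℕ → Ω → ℝ) : Prop :=
  ∀ x : ℝ, 0 < x → Tendsto (fun n => μ {ω | |f n ω| ≤ x}) atTop (nhds 0)

/-- `d` is the lattice span (period) of the distribution of the `ℕ`-valued random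
variable `T` under `μ`, i.e. `d` is the greatest common divisor of the support. -/
def LatticeSpan {Ω : Type*} [MeasurableSpace Ω] (μ : Measure Ω) (T : Ω → ℕ) (d : ℕ) : Prop :=
  (∀ n, 0 < μ {ω | T ω = n} → d ∣ n) ∧ ∀ e : ℕ, (∀ n, 0 < μ {ω | T ω = n} → e ∣ n) → e ∣ d

/-- The Markov-modulated setting: an ergodic (irreducible, aperiodic, positive recurrent)
Markov chain `M` on a countable state space `S` with transition matrix `p` and stationary
distribution `π`, modulating a sequence `(A_n, B_n)_{n ≥ 1}` of real random pairs (indexed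
here so that `A n`, `B n` are the paper's `A_{n+1}`, `B_{n+1}`): conditionally on the whole
path of the chain, the pairs are independent and the conditional law of `(A_{n+1}, B_{n+1})`
given the path depends only on `(M_n, M_{n+1})`, via the stochastic kernel `K`.
`P i` is the underlying probability measure conditioned on `M 0 = i`. -/
structure MMSetting (S : Type*) (Ω : Type*) [MeasurableSpace S] [MeasurableSingletonClass S]
    [Countable S] [MeasurableSpace Ω] where
  P : S → Measure Ω
  prob : ∀ i, IsProbabilityMeasure (P i)
  π : S → ℝ≥0∞
  πsum : ∑' i, π i = 1
  πpos : ∀ i, 0 < π i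
  p : S → S → ℝ≥0∞
  psum : ∀ i, ∑' j, p i j = 1
  stationary : ∀ j, ∑' i, π i * p i j = π j
  K : S → S → Measure (ℝ × ℝ)
  Kprob : ∀ i j, IsProbabilityMeasure (K i j)
  M : ℕ → Ω → S
  A : ℕ → Ω → ℝ
  B : ℕ → Ω → ℝ
  measM : ∀ n, Measurable (M n)
  measA : ∀ n, Measurable (A n)
  measB : ∀ n, Measurable (B n)
  start : ∀ i, P i {ω | M 0 ω = i} = 1
  chain : ∀ (i : S) (n : ℕ) (path : ℕ → S), path 0 = i →
    P i (⋂ k ∈ Finset.range (n + 1), {ω | M k ω = path k})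
      = ∏ k ∈ Finset.range n, p (path k) (path (k + 1))
  modulated : ∀ (i : S) (n : ℕ) (path : ℕ → S) (E : ℕ → Set (ℝ × ℝ)), path 0 = i →
    (∀ k, MeasurableSet (E k)) →
    P i ((⋂ k ∈ Finset.range (n + 1), {ω | M k ω = path k}) ∩
        ⋂ k ∈ Finset.range n, {ω | (A k ω, B k ω) ∈ E k})
      = P i (⋂ k ∈ Finset.range (n + 1), {ω | M k ω = path k})
        * ∏ k ∈ Finset.range n, K (path k) (path (k + 1)) (E k)
  irreducible : ∀ i j, ∃ n, 0 < P i {ω | M n ω = j}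
  recurrent : ∀ i, P i {ω | ∃ n, 0 < n ∧ M n ω = i} = 1
  posRecurrent : ∀ i, ∫⁻ ω, ((sInf {n | 0 < n ∧ M n ω = i} : ℕ) : ℝ≥0∞) ∂ P i < ⊤
  aperiodic : ∀ (i : S) (d : ℕ), (∀ n, 0 < n → 0 < P i {ω | M n ω = i} → d ∣ n) → d = 1

namespace MMSetting

variable {S : Type*} [MeasurableSpace S] [MeasurableSingletonClass S] [Countable S]
variable {Ω : Type*} [MeasurableSpace Ω]
variable (X : MMSetting S Ω)

/-- `Pπ = ∑ i, π i • P i`, the stationary (unconditional) probability measure. -/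
def Pπ : Measure Ω := Measure.sum fun i => X.π i • X.P i

/-- `Pprod n = Π_n = A_1 ⋯ A_n`, with `Π_0 = 1`. -/
def Pprod (n : ℕ) (ω : Ω) : ℝ := ∏ k ∈ Finset.range n, X.A k ω

/-- `Ssum n = ∑_{k=1}^n Π_{k-1} B_k`, the value `Ψ_1 ∘ ⋯ ∘ Ψ_n (0)` of the backward
iteration started at `0`. -/
def Ssum (n : ℕ) (ω : Ω) : ℝ := ∑ k ∈ Finset.range n, X.Pprod k ω * X.B k ω

/-- `Zb Z n = Ψ_1 ∘ ⋯ ∘ Ψ_n (Z) = Π_n Z + ∑_{k=1}^n Π_{k-1} B_k`, the backward iteration. -/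
def Zb (Z : Ω → ℝ) (n : ℕ) (ω : Ω) : ℝ := X.Pprod n ω * Z ω + X.Ssum n ω

/-- `Zf Z n = Ψ_n ∘ ⋯ ∘ Ψ_1 (Z)`, the forward iteration. -/
def Zf (Z : Ω → ℝ) : ℕ → Ω → ℝ
  | 0 => Z
  | n + 1 => fun ω => X.A n ω * Zf Z n ω + X.B n ω

/-- The perpetuity `Z_∞ = ∑_{n ≥ 1} Π_{n-1} B_n`. -/
def Zinf (ω : Ω) : ℝ := ∑' n, X.Pprod n ω * X.B n ω

/-- `tau i n = τ_n(i)`, the `n`-th return time of the driving chain to the state `i`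
(`τ_0(i) = 0`). -/
def tau (i : S) : ℕ → Ω → ℕ
  | 0 => fun _ => 0
  | n + 1 => fun ω => sInf {k | tau i n ω < k ∧ X.M k ω = i}

/-- `A_1^i = Π_{τ(i)}`. -/
def Ai (i : S) (ω : Ω) : ℝ := X.Pprod (X.tau i 1 ω) ω

/-- `B_1^i = ∑_{k=1}^{τ(i)} Π_{k-1} B_k`. -/
def Bi (i : S) (ω : Ω) : ℝ := X.Ssum (X.tau i 1 ω) ω

/-- `W^i = max_{1 ≤ k ≤ τ(i)} |Π_{k-1} B_k|`. -/
def Wi (i : S) (ω : Ω) : ℝ :=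
  (((Finset.range (X.tau i 1 ω)).sup fun k => ‖X.Pprod k ω * X.B k ω‖₊ : ℝ≥0) : ℝ)

/-- `S_{τ(i)} = - log |Π_{τ(i)}|`. -/
def Stau (i : S) (ω : Ω) : ℝ := - Real.log |X.Ai i ω|

/-- The function `J_i`: `J_i(0) = 1`, and for `x > 0`, `J_i(x) = x / E_i (S_{τ(i)}⁺ ∧ x)`
if `P_i(S_{τ(i)} ≤ 0) < 1`, and `J_i(x) = x` otherwise. -/
def Ji (i : S) (x : ℝ) : ℝ :=
  if x = 0 then 1
  else if X.P i {ω | X.Stau i ω ≤ 0} < 1 then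
    x / ∫ ω, min (max (X.Stau i ω) 0) x ∂ X.P i
  else x

/-- `τ̂(i) = inf {k ≥ 1 : M_k = i, Π_k = 1}`. -/
def hatτ (i : S) (ω : Ω) : ℕ := sInf {k | 0 < k ∧ X.M k ω = i ∧ X.Pprod k ω = 1}

/-- `Z` is an admissible initial value: it is (conditionally on `M 0`, i.e. under each `P i`)
independent of the modulated sequence `(M_n, A_n, B_n)_{n ≥ 1}`. -/
def Admissible (Z : Ω → ℝ) : Prop :=
  Measurable Z ∧
    ∀ i : S, IndepFun Z (fun ω => fun n : ℕ => (X.M (n + 1) ω, X.A n ω, X.B n ω)) (X.P i)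

/-- The degeneracy condition: `A_1 c_{M_1} + B_1 = c_{M_0}` a.s. for the family `c`. -/
def DegenD (c : S → ℝ) : Prop :=
  ∀ᵐ ω ∂ X.Pπ, X.A 0 ω * c (X.M 1 ω) + X.B 0 ω = c (X.M 0 ω)

/-- The dual degeneracy condition: `A_1 c_{M_0} + B_1 = c_{M_1}` a.s. for the family `c`. -/
def DegenDdual (c : S → ℝ) : Prop :=
  ∀ᵐ ω ∂ X.Pπ, X.A 0 ω * c (X.M 0 ω) + X.B 0 ω = c (X.M 1 ω)

end MMSetting

end Perpetuities

/-
On a first-return cycle `i = s₀ → s₁ → ⋯ → sₙ = i` of positive probability, the variables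
`A_1, …, A_n` are, conditionally on the chain following the cycle, independent with the
`A`-marginals of `K (s_{k-1}) (s_k)` as laws, and their product `Π_{τ(i)}` is `1` almost surely.
A product of independent real variables that is almost surely a nonzero constant has
deterministic factors. Every transition of positive probability lies on such a cycle, so
`A_k = a (M_{k-1}) (M_k)` almost surely for a deterministic `a`, and the product of `a` along any
closed path of positive probability is `1` (split the path at its returns). Hence the product of
`a` along a path from `j` to `l` is `H l / H j`, where `H j` is the product along a fixed path
from a reference state to `j`, so that `Π_n = H (M_n) / H (M_0)`; take `σ = sign H` and
`g = log |H|`.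
-/

theorem Real.sign_mul_abs (x : ℝ) : Real.sign x * |x| = x := by
  rcases lt_trichotomy x 0 with h | rfl | h
  · simp [Real.sign_of_neg h, abs_of_neg h]
  · simp
  · simp [Real.sign_of_pos h, abs_of_pos h]

theorem Real.sign_div_of_ne_zero {x y : ℝ} (hx : x ≠ 0) (hy : y ≠ 0) :
    Real.sign (x / y) = Real.sign x / Real.sign y := by
  rcases hx.lt_or_gt with hx | hx <;> rcases hy.lt_or_gt with hy | hy <;>
    simp [Real.sign_of_neg, Real.sign_of_pos, div_pos_of_neg_of_neg, div_neg_of_neg_of_pos,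
      div_neg_of_pos_of_neg, *]

namespace MeasureTheory.Measure

theorem eq_dirac_of_ae_eq {α : Type*} [MeasurableSpace α] {μ : Measure α}
    [IsProbabilityMeasure μ] {a : α} (h : ∀ᵐ x ∂μ, x = a) : μ = dirac a := by
  calc μ = μ.map id := Measure.map_id.symm
    _ = μ.map (fun _ => a) := Measure.map_congr h
    _ = dirac a := by simp [Measure.map_const]

end MeasureTheory.Measure

namespace MeasureTheory

theorem exists_eq_dirac_of_ae_mul_eq {β : Type*} [MeasurableSpace β]
    {μ : Measure ℝ} {ν : Measure β} [IsProbabilityMeasure μ] [IsProbabilityMeasure ν]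
    {g : β → ℝ} (hg : Measurable g) {c : ℝ} (hc : c ≠ 0)
    (h : ∀ᵐ q ∂μ.prod ν, q.1 * g q.2 = c) : ∃ a, μ = Measure.dirac a := by
  have hmeas : MeasurableSet {q : ℝ × β | q.1 * g q.2 = c} :=
    (measurable_fst.mul (hg.comp measurable_snd)) (measurableSet_singleton c)
  obtain ⟨y, hy⟩ := ((Measure.ae_ae_comm hmeas).1 (Measure.ae_ae_of_ae_prod h)).exists
  have hgy : g y ≠ 0 := by
    rintro hgy
    obtain ⟨x, hx⟩ := hy.exists
    simp [hgy, hc.symm] at hx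
  refine ⟨c / g y, Measure.eq_dirac_of_ae_eq ?_⟩
  filter_upwards [hy] with x hx
  rw [← hx, mul_div_cancel_right₀ _ hgy]

theorem exists_eq_dirac_of_ae_prod_eq {n : ℕ} {μ : Fin n → Measure ℝ}
    [∀ k, IsProbabilityMeasure (μ k)] {c : ℝ} (hc : c ≠ 0)
    (h : ∀ᵐ x ∂Measure.pi μ, ∏ k, x k = c) :
    ∃ a : Fin n → ℝ, (∀ k, μ k = Measure.dirac (a k)) ∧ ∏ k, a k = c := by
  have hdirac : ∀ k, ∃ a, μ k = Measure.dirac a := by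
    intro k
    obtain ⟨m, rfl⟩ := Nat.exists_eq_succ_of_ne_zero k.pos.ne'
    have hpres := measurePreserving_piFinSuccAbove μ k
    refine exists_eq_dirac_of_ae_mul_eq (ν := Measure.pi fun j => μ (k.succAbove j))
      (g := fun z => ∏ j, z j)
      (Finset.univ.measurable_prod fun j _ => measurable_pi_apply j) hc ?_
    rw [← hpres.map_eq, ae_map_iff hpres.measurable.aemeasurable]
    · filter_upwards [h] with x hx
      rw [← hx, Fin.prod_univ_succAbove x k]
      rfl
    · exact (measurable_fst.mul ((Finset.univ.measurable_prod fun j _ =>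
        measurable_pi_apply j).comp measurable_snd)) (measurableSet_singleton c)
  choose a ha using hdirac
  refine ⟨a, ha, ?_⟩
  have hall : ∀ᵐ x ∂Measure.pi μ, ∀ k, x k = a k :=
    eventually_all.2 fun k => (Measure.tendsto_eval_ae_ae (μ := μ) (i := k)).eventually
      (p := fun y => y = a k) (by rw [ha k, ae_dirac_eq]; exact eventually_pure.2 rfl)
  obtain ⟨x, hx, hxa⟩ := (h.and hall).exists
  rw [← hx]
  exact Finset.prod_congr rfl fun k _ => (hxa k).symm

end MeasureTheory

/-- A path `i = vert 0 → vert 1 → ⋯ → vert len = j` all of whose transitions have `p ≠ 0`;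
the values of `vert` beyond `len` play no role. -/
structure PosPath {S R : Type*} [Zero R] (p : S → S → R) (i j : S) where
  len : ℕ
  vert : ℕ → S
  vert_zero : vert 0 = i
  vert_len : vert len = j
  ne_zero : ∀ k < len, p (vert k) (vert (k + 1)) ≠ 0

namespace PosPath

variable {S R : Type*} [Zero R] {p : S → S → R} {i j l : S}

def weight {M : Type*} [CommMonoid M] (u : PosPath p i j) (w : S → S → M) : M :=
  ∏ k ∈ Finset.range u.len, w (u.vert k) (u.vert (k + 1))

def edge (h : p i j ≠ 0) : PosPath p i j where
  len := 1
  vert k := if k = 0 then i else j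
  vert_zero := rfl
  vert_len := rfl
  ne_zero k hk := by simpa [Nat.lt_one_iff.1 hk] using h

def append (u : PosPath p i j) (v : PosPath p j l) : PosPath p i l where
  len := u.len + v.len
  vert k := if k < u.len then u.vert k else v.vert (k - u.len)
  vert_zero := by
    rcases Nat.eq_zero_or_pos u.len with h | h
    · have hij := u.vert_len
      rw [h, u.vert_zero] at hij
      simp [h, v.vert_zero, hij]
    · simp [h, u.vert_zero]
  vert_len := by simp [v.vert_len]
  ne_zero k hk := by
    by_cases hku : k < u.len
    · by_cases hku' : k + 1 < u.len
      · simpa [hku, hku'] using u.ne_zero k hku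
      · have hk1 : k + 1 = u.len := by omega
        simpa [hku, hku', hk1, u.vert_len, v.vert_zero] using u.ne_zero k hku
    · have := v.ne_zero (k - u.len) (by omega)
      simpa [hku, show ¬ k + 1 < u.len by omega, show k + 1 - u.len = k - u.len + 1 by omega]
        using this

def take (u : PosPath p i j) (m : ℕ) (hm : m ≤ u.len) (hl : u.vert m = l) : PosPath p i l where
  len := m
  vert := u.vert
  vert_zero := u.vert_zero
  vert_len := hl
  ne_zero k hk := u.ne_zero k (by omega)

def drop (u : PosPath p i j) (m : ℕ) (hm : m ≤ u.len) (hl : u.vert m = l) : PosPath p l j where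
  len := u.len - m
  vert k := u.vert (m + k)
  vert_zero := hl
  vert_len := by rw [Nat.add_sub_cancel' hm, u.vert_len]
  ne_zero k hk := u.ne_zero (m + k) (by omega)

variable {M : Type*} [CommMonoid M] (w : S → S → M)

theorem weight_append (u : PosPath p i j) (v : PosPath p j l) :
    (u.append v).weight w = u.weight w * v.weight w := by
  simp only [weight, append]
  rw [Finset.prod_range_add]
  congr 1
  · refine Finset.prod_congr rfl fun k hk => ?_
    have hk := Finset.mem_range.1 hk
    by_cases hk' : k + 1 < u.len
    · simp [hk, hk']
    · have hk1 : k + 1 = u.len := by omega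
      simp [hk, hk1, u.vert_len, v.vert_zero]
  · refine Finset.prod_congr rfl fun k _ => ?_
    simp [show ¬ u.len + k + 1 < u.len by omega, show u.len + k + 1 - u.len = k + 1 by omega]

theorem weight_take_mul_weight_drop (u : PosPath p i j) {m : ℕ} (hm : m ≤ u.len)
    (hl : u.vert m = l) : (u.take m hm hl).weight w * (u.drop m hm hl).weight w = u.weight w := by
  simp only [weight, take, drop]
  conv_rhs => rw [← Nat.add_sub_cancel' hm, Finset.prod_range_add]
  rfl

def IsFirstReturn (u : PosPath p i i) : Prop :=
  0 < u.len ∧ ∀ k, 0 < k → k < u.len → u.vert k ≠ i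

theorem weight_eq_one_of_forall_isFirstReturn
    (h : ∀ u : PosPath p i i, u.IsFirstReturn → u.weight w = 1) (u : PosPath p i i) :
    u.weight w = 1 := by
  induction hn : u.len using Nat.strong_induction_on generalizing u with
  | _ n ih =>
    rcases Nat.eq_zero_or_pos n with rfl | hpos
    · simp [weight, hn]
    have hex : ∃ k, 0 < k ∧ u.vert k = i := ⟨u.len, hn ▸ hpos, u.vert_len⟩
    classical
    set t := Nat.find hex
    have ht : 0 < t ∧ u.vert t = i := Nat.find_spec hex
    have htn : t ≤ u.len := Nat.find_min' hex ⟨hn ▸ hpos, u.vert_len⟩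
    have hfirst : (u.take t htn ht.2).IsFirstReturn :=
      ⟨ht.1, fun k hk0 hkt => fun hk => Nat.find_min hex hkt ⟨hk0, hk⟩⟩
    rw [← u.weight_take_mul_weight_drop w htn ht.2, h _ hfirst,
      ih (u.len - t) (by omega) (u.drop t htn ht.2) rfl, one_mul]

theorem exists_isFirstReturn_vert_one (h : p i j ≠ 0) (v : PosPath p j i) :
    ∃ u : PosPath p i i, u.IsFirstReturn ∧ u.vert 1 = j := by
  classical
  have hex : ∃ k, v.vert k = i := ⟨v.len, v.vert_len⟩
  have htn : Nat.find hex ≤ v.len := Nat.find_min' hex v.vert_len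
  refine ⟨(edge h).append (v.take _ htn (Nat.find_spec hex)), ⟨by simp [append, edge], ?_⟩, ?_⟩
  · intro k hk0 hk
    simp only [append, edge, take] at hk ⊢
    have := Nat.find_min hex (m := k - 1) (by omega)
    simpa [show ¬ k < 1 by omega] using this
  · simp [append, edge, take, v.vert_zero]

end PosPath

namespace Perpetuities.MMSetting

variable {S : Type*} [MeasurableSpace S] [MeasurableSingletonClass S] [Countable S]
variable {Ω : Type*} [MeasurableSpace Ω] (X : MMSetting S Ω)

instance (i : S) : IsProbabilityMeasure (X.P i) := X.prob i

def cylinder (n : ℕ) (f : ℕ → S) : Set Ω := ⋂ k ∈ Finset.range (n + 1), {ω | X.M k ω = f k}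

def lawA (j l : S) : Measure ℝ := (X.K j l).map Prod.fst

instance (j l : S) : IsProbabilityMeasure (X.lawA j l) :=
  haveI := X.Kprob j l
  Measure.isProbabilityMeasure_map measurable_fst.aemeasurable

/-- On transitions of positive probability `lawA j l` is a Dirac mass (`lawA_eq_dirac`), and this
integral is its atom. -/
def edgeFactor (j l : S) : ℝ := ∫ x, x ∂X.lawA j l

variable {X}

theorem mem_cylinder {n : ℕ} {f : ℕ → S} {ω : Ω} :
    ω ∈ X.cylinder n f ↔ ∀ k ≤ n, X.M k ω = f k := by
  simp [cylinder]

variable (X)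

theorem measurableSet_cylinder (n : ℕ) (f : ℕ → S) : MeasurableSet (X.cylinder n f) :=
  .biInter (Finset.range (n + 1)).countable_toSet fun k _ =>
    X.measM k (measurableSet_singleton (f k))

theorem measurable_Pprod (n : ℕ) : Measurable (X.Pprod n) :=
  Finset.measurable_prod _ fun k _ => X.measA k

theorem lawA_apply (j l : S) {s : Set ℝ} (hs : MeasurableSet s) :
    X.lawA j l s = X.K j l (s ×ˢ Set.univ) := by
  rw [lawA, Measure.map_apply measurable_fst hs, Set.prod_univ]

theorem measure_cylinder_ne_zero {i j : S} (u : PosPath X.p i j) :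
    X.P i (X.cylinder u.len u.vert) ≠ 0 := by
  rw [cylinder, X.chain i _ _ u.vert_zero]
  exact Finset.prod_ne_zero_iff.2 fun k hk => u.ne_zero k (Finset.mem_range.1 hk)

theorem measure_cylinder_inter_preimage_pi {i : S} {n : ℕ} {f : ℕ → S} (hf : f 0 = i)
    {s : Fin n → Set ℝ} (hs : ∀ k, MeasurableSet (s k)) :
    X.P i (X.cylinder n f ∩ (fun ω (k : Fin n) => X.A k ω) ⁻¹' Set.univ.pi s)
      = X.P i (X.cylinder n f) * ∏ k : Fin n, X.lawA (f k) (f (k + 1)) (s k) := by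
  classical
  let s' : ℕ → Set ℝ := fun k => if hk : k < n then s ⟨k, hk⟩ else Set.univ
  have hs' : ∀ k, MeasurableSet (s' k) := fun k => by
    by_cases hk : k < n <;> simp [s', hk, hs]
  have hpre : (fun ω (k : Fin n) => X.A k ω) ⁻¹' Set.univ.pi s
      = ⋂ k ∈ Finset.range n, {ω | (X.A k ω, X.B k ω) ∈ s' k ×ˢ Set.univ} := by
    ext ω
    simp only [Set.mem_preimage, Set.mem_univ_pi, Set.mem_iInter, Finset.mem_range,
      Set.mem_prod, Set.mem_univ, and_true]
    exact ⟨fun h k hk => by simpa [s', hk] using h ⟨k, hk⟩,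
      fun h k => by simpa [s', k.2] using h k k.2⟩
  rw [hpre, cylinder, X.modulated i n f _ hf fun k => (hs' k).prod .univ,
    ← Fin.prod_univ_eq_prod_range (fun k => X.K (f k) (f (k + 1)) (s' k ×ˢ Set.univ))]
  congr 1
  refine Finset.prod_congr rfl fun k _ => ?_
  rw [X.lawA_apply _ _ (hs k)]
  simp [s']

theorem map_restrict_cylinder {i : S} {n : ℕ} {f : ℕ → S} (hf : f 0 = i) :
    ((X.P i).restrict (X.cylinder n f)).map (fun ω (k : Fin n) => X.A k ω)
      = X.P i (X.cylinder n f) • Measure.pi fun k : Fin n => X.lawA (f k) (f (k + 1)) := by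
  have hmeas : Measurable fun ω (k : Fin n) => X.A k ω := measurable_pi_lambda _ fun k => X.measA k
  by_cases h0 : X.P i (X.cylinder n f) = 0
  · simp [Measure.restrict_eq_zero.2 h0, h0]
  rw [Measure.pi_eq (μ' := (X.P i (X.cylinder n f))⁻¹ •
      ((X.P i).restrict (X.cylinder n f)).map fun ω (k : Fin n) => X.A k ω), smul_smul,
    ENNReal.mul_inv_cancel h0 (measure_ne_top _ _), one_smul]
  intro s hs
  rw [Measure.smul_apply, Measure.map_apply hmeas (.univ_pi hs),
    Measure.restrict_apply (hmeas (.univ_pi hs)), Set.inter_comm,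
    X.measure_cylinder_inter_preimage_pi hf hs, smul_eq_mul, ← mul_assoc,
    ENNReal.inv_mul_cancel h0 (measure_ne_top _ _), one_mul]

theorem tau_one_eq_len {i : S} {u : PosPath X.p i i} (hu : u.IsFirstReturn) {ω : Ω}
    (hω : ω ∈ X.cylinder u.len u.vert) : X.tau i 1 ω = u.len := by
  have hM := mem_cylinder.1 hω
  have hlen : 0 < u.len ∧ X.M u.len ω = i := ⟨hu.1, by rw [hM _ le_rfl, u.vert_len]⟩
  show sInf {k | 0 < k ∧ X.M k ω = i} = u.len
  refine le_antisymm (Nat.sInf_le hlen) (le_csInf ⟨_, hlen⟩ ?_)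
  rintro k ⟨hk0, hki⟩
  by_contra! hk
  exact hu.2 k hk0 hk (by rw [← hM k hk.le, hki])

variable {X}

theorem ae_Pprod_eq_one_of_isFirstReturn (hone : ∀ i : S, X.P i {ω | X.Ai i ω = 1} = 1)
    {i : S} {u : PosPath X.p i i} (hu : u.IsFirstReturn) :
    ∀ᵐ ω ∂X.P i, ω ∈ X.cylinder u.len u.vert → X.Pprod u.len ω = 1 := by
  set T := {ω | X.Pprod u.len ω = 1} ∪ (X.cylinder u.len u.vert)ᶜ
  have hT : MeasurableSet T :=
    (X.measurable_Pprod _ (measurableSet_singleton 1)).union (X.measurableSet_cylinder _ _).compl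
  -- `{A_1^i = 1}` need not be measurable, but it lies in the measurable set `T`.
  have hsub : {ω | X.Ai i ω = 1} ⊆ T := fun ω hω => by
    by_cases hc : ω ∈ X.cylinder u.len u.vert
    · left
      simpa [Ai, X.tau_one_eq_len hu hc] using hω
    · exact Or.inr hc
  have hT1 : X.P i T = X.P i Set.univ :=
    le_antisymm (measure_mono (Set.subset_univ _))
      (by rw [measure_univ, ← hone i]; exact measure_mono hsub)
  filter_upwards [(ae_iff_measure_eq hT.nullMeasurableSet).2 hT1] with ω hω hc
  exact hω.resolve_right (not_not.2 hc)

theorem lawA_eq_dirac_and_weight_eq_one (hone : ∀ i : S, X.P i {ω | X.Ai i ω = 1} = 1)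
    {i : S} {u : PosPath X.p i i} (hu : u.IsFirstReturn) :
    (∀ k < u.len, X.lawA (u.vert k) (u.vert (k + 1))
        = Measure.dirac (X.edgeFactor (u.vert k) (u.vert (k + 1)))) ∧
      u.weight X.edgeFactor = 1 := by
  have hmeas : Measurable fun ω (k : Fin u.len) => X.A k ω :=
    measurable_pi_lambda _ fun k => X.measA k
  have hprod : ∀ᵐ x ∂Measure.pi fun k : Fin u.len => X.lawA (u.vert k) (u.vert (k + 1)),
      ∏ k, x k = 1 := by
    refine (Measure.absolutelyContinuous_smul (X.measure_cylinder_ne_zero u)).ae_le ?_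
    rw [← X.map_restrict_cylinder u.vert_zero]
    refine (ae_map_iff hmeas.aemeasurable (measurableSet_eq_fun
      (Finset.univ.measurable_prod fun k _ => measurable_pi_apply k) measurable_const)).2 ?_
    rw [ae_restrict_iff' (X.measurableSet_cylinder _ _)]
    filter_upwards [ae_Pprod_eq_one_of_isFirstReturn hone hu] with ω hω hc
    rw [← hω hc, Pprod, ← Fin.prod_univ_eq_prod_range]
  obtain ⟨a, ha, ha1⟩ := exists_eq_dirac_of_ae_prod_eq one_ne_zero hprod
  have hfac : ∀ k : Fin u.len, X.edgeFactor (u.vert k) (u.vert (k + 1)) = a k := fun k => by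
    rw [edgeFactor, ha k, integral_dirac]
  refine ⟨fun k hk => by rw [hfac ⟨k, hk⟩]; exact ha ⟨k, hk⟩, ?_⟩
  rw [PosPath.weight,
    ← Fin.prod_univ_eq_prod_range (fun k => X.edgeFactor (u.vert k) (u.vert (k + 1)))]
  simp [hfac, ha1]

theorem ae_of_forall_cylinder {i : S} (n : ℕ) {q : Ω → Prop}
    (h : ∀ f : ℕ → S, f 0 = i → (∀ k < n, X.p (f k) (f (k + 1)) ≠ 0) →
      ∀ᵐ ω ∂X.P i, ω ∈ X.cylinder n f → q ω) :
    ∀ᵐ ω ∂X.P i, q ω := by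
  classical
  let extend : (Fin (n + 1) → S) → ℕ → S := fun v k => if hk : k < n + 1 then v ⟨k, hk⟩ else i
  have hstart : ∀ᵐ ω ∂X.P i, X.M 0 ω = i :=
    (ae_iff_measure_eq (X.measM 0 (measurableSet_singleton i)).nullMeasurableSet).2
      (by rw [measure_univ]; exact X.start i)
  have hcyl : ∀ v, ∀ᵐ ω ∂X.P i, ω ∈ X.cylinder n (extend v) → q ω := by
    intro v
    by_cases hv0 : extend v 0 = i
    · by_cases hvp : ∀ k < n, X.p (extend v k) (extend v (k + 1)) ≠ 0
      · exact h _ hv0 hvp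
      obtain ⟨k, hk, hk0⟩ : ∃ k < n, X.p (extend v k) (extend v (k + 1)) = 0 := by simpa using hvp
      have hnull : X.P i (X.cylinder n (extend v)) = 0 := by
        rw [cylinder, X.chain i n _ hv0]
        exact Finset.prod_eq_zero (Finset.mem_range.2 hk) hk0
      filter_upwards [measure_eq_zero_iff_ae_notMem.1 hnull] with ω hω hc using absurd hc hω
    · filter_upwards [hstart] with ω hω hc
      exact absurd ((mem_cylinder.1 hc 0 (Nat.zero_le n)).symm.trans hω) hv0
  filter_upwards [ae_all_iff.2 hcyl] with ω hω
  exact hω (fun k => X.M k ω) (mem_cylinder.2 fun k hk => by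
    simp only [extend, dif_pos (Nat.lt_succ_of_le hk)])

variable (X) in
theorem nonempty_posPath (i j : S) : Nonempty (PosPath X.p i j) := by
  obtain ⟨n, hn⟩ := X.irreducible i j
  by_contra hnone
  refine hn.ne' (measure_eq_zero_iff_ae_notMem.2 (ae_of_forall_cylinder n fun f hf0 hf => ?_))
  refine .of_forall fun ω hω hMn => hnone ⟨⟨n, f, hf0, ?_, hf⟩⟩
  rw [← mem_cylinder.1 hω n le_rfl]
  exact hMn

theorem lawA_eq_dirac (hone : ∀ i : S, X.P i {ω | X.Ai i ω = 1} = 1) {j l : S}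
    (h : X.p j l ≠ 0) : X.lawA j l = Measure.dirac (X.edgeFactor j l) := by
  obtain ⟨u, hu, hu1⟩ := PosPath.exists_isFirstReturn_vert_one h (X.nonempty_posPath l j).some
  have := (lawA_eq_dirac_and_weight_eq_one hone hu).1 0 hu.1
  rwa [u.vert_zero, zero_add, hu1] at this

theorem weight_edgeFactor_eq_one (hone : ∀ i : S, X.P i {ω | X.Ai i ω = 1} = 1) {i : S}
    (u : PosPath X.p i i) : u.weight X.edgeFactor = 1 :=
  PosPath.weight_eq_one_of_forall_isFirstReturn _
    (fun _ hv => (lawA_eq_dirac_and_weight_eq_one hone hv).2) u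

theorem ae_p_ne_zero_and_A_eq_edgeFactor (hone : ∀ i : S, X.P i {ω | X.Ai i ω = 1} = 1)
    (i : S) (n : ℕ) :
    ∀ᵐ ω ∂X.P i, (∀ k < n, X.p (X.M k ω) (X.M (k + 1) ω) ≠ 0) ∧
      ∀ k < n, X.A k ω = X.edgeFactor (X.M k ω) (X.M (k + 1) ω) := by
  refine ae_of_forall_cylinder n fun f hf0 hf => ?_
  have hdirac : ∀ᵐ x ∂Measure.pi fun k : Fin n => X.lawA (f k) (f (k + 1)),
      ∀ k : Fin n, x k = X.edgeFactor (f k) (f (k + 1)) :=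
    eventually_all.2 fun k => (Measure.tendsto_eval_ae_ae (i := k)).eventually
      (p := fun y => y = X.edgeFactor (f k) (f (k + 1)))
      (by rw [lawA_eq_dirac hone (hf k k.2), ae_dirac_eq]; exact eventually_pure.2 rfl)
  have hmeas : Measurable fun ω (k : Fin n) => X.A k ω := measurable_pi_lambda _ fun k => X.measA k
  have hA := ae_of_ae_map hmeas.aemeasurable
    (X.map_restrict_cylinder hf0 ▸ Measure.ae_smul_measure hdirac (X.P i (X.cylinder n f)))
  filter_upwards [(ae_restrict_iff' (X.measurableSet_cylinder n f)).1 hA] with ω hω hc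
  have hM := mem_cylinder.1 hc
  refine ⟨fun k hk => ?_, fun k hk => ?_⟩
  · rw [hM k hk.le, hM (k + 1) hk]
    exact hf k hk
  · rw [hM k hk.le, hM (k + 1) hk]
    exact hω hc ⟨k, hk⟩

theorem ae_Pπ_of_forall {q : Ω → Prop} (h : ∀ i, ∀ᵐ ω ∂X.P i, q ω) : ∀ᵐ ω ∂X.Pπ, q ω :=
  Measure.ae_sum_iff.2 fun i => Measure.ae_smul_measure (h i) _

theorem exists_Pprod_eq_div (hone : ∀ i : S, X.P i {ω | X.Ai i ω = 1} = 1) :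
    ∃ H : S → ℝ, (∀ j, H j ≠ 0) ∧
      ∀ n, ∀ᵐ ω ∂X.Pπ, X.Pprod n ω = H (X.M n ω) / H (X.M 0 ω) := by
  obtain ⟨i₀⟩ : Nonempty S := by
    by_contra h
    rw [not_nonempty_iff] at h
    simpa using X.πsum
  let out : ∀ j, PosPath X.p i₀ j := fun j => (X.nonempty_posPath i₀ j).some
  let back : ∀ j, PosPath X.p j i₀ := fun j => (X.nonempty_posPath j i₀).some
  have hback : ∀ j, (out j).weight X.edgeFactor * (back j).weight X.edgeFactor = 1 := fun j => by
    rw [← PosPath.weight_append, weight_edgeFactor_eq_one hone]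
  have hpath : ∀ {j l} (u : PosPath X.p j l), u.weight X.edgeFactor
      = (out l).weight X.edgeFactor / (out j).weight X.edgeFactor := by
    intro j l u
    have hcycle := weight_edgeFactor_eq_one hone (((out j).append u).append (back l))
    rw [PosPath.weight_append, PosPath.weight_append] at hcycle
    rw [eq_div_iff (left_ne_zero_of_mul_eq_one (hback j))]
    linear_combination (out l).weight X.edgeFactor * hcycle
      - u.weight X.edgeFactor * (out j).weight X.edgeFactor * hback l
  refine ⟨fun j => (out j).weight X.edgeFactor, fun j => left_ne_zero_of_mul_eq_one (hback j),
    fun n => ?_⟩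
  filter_upwards [ae_Pπ_of_forall fun i => ae_p_ne_zero_and_A_eq_edgeFactor hone i n]
    with ω ⟨hpos, hA⟩
  rw [← hpath ⟨n, fun k => X.M k ω, rfl, rfl, hpos⟩]
  exact Finset.prod_congr rfl fun k hk => hA k (Finset.mem_range.1 hk)

end Perpetuities.MMSetting

namespace Perpetuities

open MMSetting

theorem sign_of_products_general
    {S : Type*} [MeasurableSpace S] [MeasurableSingletonClass S] [Countable S]
    {Ω : Type*} [MeasurableSpace Ω] (X : MMSetting S Ω)
    (hone : ∀ i : S, X.P i {ω | X.Ai i ω = 1} = 1) :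
    ∃ σ : S → ℝ, (∀ j : S, σ j = 1 ∨ σ j = -1) ∧
      (∀ n : ℕ, 1 ≤ n →
        ∀ᵐ ω ∂ X.Pπ, Real.sign (X.Pprod n ω) = σ (X.M n ω) / σ (X.M 0 ω)) ∧
      ∃ g : S → ℝ, ∀ n : ℕ, 1 ≤ n →
        ∀ᵐ ω ∂ X.Pπ,
          X.Pprod n ω = σ (X.M n ω) * Real.exp (g (X.M n ω) - g (X.M 0 ω)) / σ (X.M 0 ω) := by
  obtain ⟨H, hH, hPprod⟩ := X.exists_Pprod_eq_div hone
  refine ⟨fun j => Real.sign (H j), fun j => (Real.sign_apply_eq_of_ne_zero _ (hH j)).symm,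
    fun n _ => ?_, fun j => Real.log |H j|, fun n _ => ?_⟩
  · filter_upwards [hPprod n] with ω hω
    rw [hω, Real.sign_div_of_ne_zero (hH _) (hH _)]
  · filter_upwards [hPprod n] with ω hω
    rw [hω, Real.exp_sub, Real.exp_log (abs_pos.2 (hH _)), Real.exp_log (abs_pos.2 (hH _))]
    conv_lhs => rw [← Real.sign_mul_abs (H (X.M n ω)), ← Real.sign_mul_abs (H (X.M 0 ω))]
    ring

/-- **Lemma 4.9** (sign of `Π_n`). In the Markov-modulated setting with
`P_π(A_1 = 0) = 0`, assume `P_i(A_1^i = 1) = 1` for all `i ∈ S`. Then there exists a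
family `(σ_j)_{j ∈ S}` of signs in `{±1}` such that `sign(Π_n) = σ_{M_n} / σ_{M_0}` a.s.
for all `n ≥ 1`, and consequently `Π_n = σ_{M_n} e^{g(M_n) - g(M_0)} / σ_{M_0}` a.s. for a
suitable function `g : S → ℝ`. -/
theorem sign_of_products
    {S : Type*} [MeasurableSpace S] [MeasurableSingletonClass S] [Countable S]
    {Ω : Type*} [MeasurableSpace Ω] (X : MMSetting S Ω)
    (hA : X.Pπ {ω | X.A 0 ω = 0} = 0)
    (hone : ∀ i : S, X.P i {ω | X.Ai i ω = 1} = 1) :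
    ∃ σ : S → ℝ, (∀ j : S, σ j = 1 ∨ σ j = -1) ∧
      (∀ n : ℕ, 1 ≤ n →
        ∀ᵐ ω ∂ X.Pπ, Real.sign (X.Pprod n ω) = σ (X.M n ω) / σ (X.M 0 ω)) ∧
      ∃ g : S → ℝ, ∀ n : ℕ, 1 ≤ n →
        ∀ᵐ ω ∂ X.Pπ,
          X.Pprod n ω = σ (X.M n ω) * Real.exp (g (X.M n ω) - g (X.M 0 ω)) / σ (X.M 0 ω) :=
  sign_of_products_general X hone

end Perpetuities
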